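/- Suppose Ω_- and Ω_+ have opposite real parts (Re Ω_- = -Re Ω_+), and both the scattering matrix S and the coupling matrices C_-, C_+ are purely imaginary. Then for every s ∈ ℂ such that s·I_{2n} - A is invertible, the top-left block of the quadrature transfer function vanishes: G_qq[s] = 0, i.e., a BAE measurement of q_out with respect to q_in is realized. -/
import Mathlib


open Matrix Complex

noncomputable section

/-- Entrywise real part of a complex matrix, viewed as a complex matrix. -/
def reM {α β : Type*} (M : Matrix α β ℂ) : Matrix α β ℂ :=
  M.map fun z => (z.re : ℂ)

/-- Entrywise imaginary part of a complex matrix, viewed as a complex matrix. -/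
def imM {α β : Type*} (M : Matrix α β ℂ) : Matrix α β ℂ :=
  M.map fun z => (z.im : ℂ)

/-- The quadrature scattering matrix `D = [[Re S, -Im S],[Im S, Re S]]`. -/
def QD {m : ℕ} (S : Matrix (Fin m) (Fin m) ℂ) :
    Matrix (Fin m ⊕ Fin m) (Fin m ⊕ Fin m) ℂ :=
  fromBlocks (reM S) (-(imM S)) (imM S) (reM S)

/-- The quadrature coupling matrix
`C = [[Re(C₋+C₊), -Im(C₋-C₊)],[Im(C₋+C₊), Re(C₋-C₊)]]`. -/
def QC {m n : ℕ} (Cm Cp : Matrix (Fin m) (Fin n) ℂ) :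
    Matrix (Fin m ⊕ Fin m) (Fin n ⊕ Fin n) ℂ :=
  fromBlocks (reM (Cm + Cp)) (-(imM (Cm - Cp))) (imM (Cm + Cp)) (reM (Cm - Cp))

/-- The quadrature input matrix
`B = -[[Re(C₋†-C₊†), -Im(C₋†-C₊†)],[Im(C₋†+C₊†), Re(C₋†+C₊†)]] · D`. -/
def QB {m n : ℕ} (Cm Cp : Matrix (Fin m) (Fin n) ℂ) (S : Matrix (Fin m) (Fin m) ℂ) :
    Matrix (Fin n ⊕ Fin n) (Fin m ⊕ Fin m) ℂ :=
  -(fromBlocks (reM (Cmᴴ - Cpᴴ)) (-(imM (Cmᴴ - Cpᴴ)))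
      (imM (Cmᴴ + Cpᴴ)) (reM (Cmᴴ + Cpᴴ)) * QD S)

/-- `JH = [[Im(Ω₋+Ω₊), Re(Ω₋-Ω₊)],[-Re(Ω₋+Ω₊), Im(Ω₋-Ω₊)]]`. -/
def QJH {n : ℕ} (Om Op : Matrix (Fin n) (Fin n) ℂ) :
    Matrix (Fin n ⊕ Fin n) (Fin n ⊕ Fin n) ℂ :=
  fromBlocks (imM (Om + Op)) (reM (Om - Op)) (-(reM (Om + Op))) (imM (Om - Op))

/-- `𝕁ₖ = [[0, Iₖ],[-Iₖ, 0]]`. -/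
def QJ (k : ℕ) : Matrix (Fin k ⊕ Fin k) (Fin k ⊕ Fin k) ℂ :=
  fromBlocks 0 1 (-1) 0

/-- `C♯ = -𝕁ₙ · C† · 𝕁ₘ`. -/
def QCsharp {m n : ℕ} (Cm Cp : Matrix (Fin m) (Fin n) ℂ) :
    Matrix (Fin n ⊕ Fin n) (Fin m ⊕ Fin m) ℂ :=
  -(QJ n * (QC Cm Cp)ᴴ * QJ m)

/-- `A = JH - (1/2) · C♯ · C`. -/
def QA {m n : ℕ} (Cm Cp : Matrix (Fin m) (Fin n) ℂ) (Om Op : Matrix (Fin n) (Fin n) ℂ) :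
    Matrix (Fin n ⊕ Fin n) (Fin n ⊕ Fin n) ℂ :=
  QJH Om Op - (1/2 : ℂ) • (QCsharp Cm Cp * QC Cm Cp)

/-- The quadrature transfer function `G[s] = D + C (sI - A)⁻¹ B`. -/
def QG {m n : ℕ} (Cm Cp : Matrix (Fin m) (Fin n) ℂ) (Om Op : Matrix (Fin n) (Fin n) ℂ)
    (S : Matrix (Fin m) (Fin m) ℂ) (s : ℂ) :
    Matrix (Fin m ⊕ Fin m) (Fin m ⊕ Fin m) ℂ :=
  QD S + QC Cm Cp *
    (s • (1 : Matrix (Fin n ⊕ Fin n) (Fin n ⊕ Fin n) ℂ) - QA Cm Cp Om Op)⁻¹ * QB Cm Cp S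

lemma reM_add' {α β : Type*} (X Y : Matrix α β ℂ) : reM (X + Y) = reM X + reM Y := by
  ext i j; simp [reM]

lemma reM_sub' {α β : Type*} (X Y : Matrix α β ℂ) : reM (X - Y) = reM X - reM Y := by
  ext i j; simp [reM]

lemma reM_conjT {α β : Type*} (X : Matrix α β ℂ) : reM (Xᴴ) = (reM X)ᵀ := by
  ext i j; simp [reM]

lemma fromBlocks_sub' {l m n o α : Type*} [Sub α]
    (A A' : Matrix n l α) (B B' : Matrix n m α) (C C' : Matrix o l α) (D D' : Matrix o m α) :
    fromBlocks A B C D - fromBlocks A' B' C' D' =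
      fromBlocks (A - A') (B - B') (C - C') (D - D') := by
  ext (i | i) (j | j) <;> rfl

/-- Re Ω₋ = -Re Ω₊, S, C₋, C₊ purely imaginary ⟹ G_qq[s] = 0. -/
theorem stmt10 {m n : ℕ} (Cm Cp : Matrix (Fin m) (Fin n) ℂ)
    (Om Op : Matrix (Fin n) (Fin n) ℂ)
    (S : Matrix (Fin m) (Fin m) ℂ)
    (hOmHerm : Omᴴ = Om) (hOpSymm : Opᵀ = Op)
    (hRe : reM Om = -(reM Op)) (hS : reM S = 0) (hCm : reM Cm = 0) (hCp : reM Cp = 0)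
    (s : ℂ)
    (hs : IsUnit (s • (1 : Matrix (Fin n ⊕ Fin n) (Fin n ⊕ Fin n) ℂ) - QA Cm Cp Om Op)) :
    (QG Cm Cp Om Op S s).toBlocks₁₁ = 0 := by
  have h1 : reM (Cm + Cp) = 0 := by rw [reM_add', hCm, hCp, add_zero]
  have h2 : reM (Cm - Cp) = 0 := by rw [reM_sub', hCm, hCp, sub_zero]
  have h3 : reM (Cmᴴ + Cpᴴ) = 0 := by
    rw [reM_add', reM_conjT, reM_conjT, hCm, hCp]; simp
  have h4 : reM (Cmᴴ - Cpᴴ) = 0 := by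
    rw [reM_sub', reM_conjT, reM_conjT, hCm, hCp]; simp
  have h5 : reM (Om + Op) = 0 := by rw [reM_add', hRe, neg_add_cancel]
  set c12 : Matrix (Fin m) (Fin n) ℂ := -(imM (Cm - Cp)) with hc12
  set c21 : Matrix (Fin m) (Fin n) ℂ := imM (Cm + Cp) with hc21
  have hC : QC Cm Cp = fromBlocks 0 c12 c21 0 := by rw [QC, h1, h2]
  have hD : QD S = fromBlocks 0 (-(imM S)) (imM S) 0 := by rw [QD, hS]
  have hB : QB Cm Cp S =
      fromBlocks (imM (Cmᴴ - Cpᴴ) * imM S) 0 0 (imM (Cmᴴ + Cpᴴ) * imM S) := by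
    rw [QB, h3, h4, hD, fromBlocks_multiply]
    simp [fromBlocks_neg]
  have hCs : QCsharp Cm Cp = fromBlocks 0 (-(c12ᴴ)) (-(c21ᴴ)) 0 := by
    rw [QCsharp, hC, QJ, QJ, fromBlocks_conjTranspose, fromBlocks_multiply,
      fromBlocks_multiply]
    simp [fromBlocks_neg]
  have hX : QCsharp Cm Cp * QC Cm Cp =
      fromBlocks (-(c12ᴴ) * c21) 0 0 (-(c21ᴴ) * c12) := by
    rw [hCs, hC, fromBlocks_multiply]
    simp
  have hJH : QJH Om Op =
      fromBlocks (imM (Om + Op)) (reM (Om - Op)) 0 (imM (Om - Op)) := by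
    rw [QJH, h5, neg_zero]
  have hQA : QA Cm Cp Om Op =
      fromBlocks (imM (Om + Op) - (1/2 : ℂ) • (-(c12ᴴ) * c21)) (reM (Om - Op)) 0
        (imM (Om - Op) - (1/2 : ℂ) • (-(c21ᴴ) * c12)) := by
    rw [QA, hJH, hX, fromBlocks_smul, fromBlocks_sub']
    simp
  set P : Matrix (Fin n) (Fin n) ℂ :=
    s • 1 - (imM (Om + Op) - (1/2 : ℂ) • (-(c12ᴴ) * c21)) with hP
  set Q : Matrix (Fin n) (Fin n) ℂ := -(reM (Om - Op)) with hQ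
  set R : Matrix (Fin n) (Fin n) ℂ :=
    s • 1 - (imM (Om - Op) - (1/2 : ℂ) • (-(c21ᴴ) * c12)) with hR
  have hone : (s • (1 : Matrix (Fin n ⊕ Fin n) (Fin n ⊕ Fin n) ℂ)) =
      fromBlocks (s • 1) 0 0 (s • 1) := by
    rw [← fromBlocks_one, fromBlocks_smul, smul_zero]
  have hM : s • (1 : Matrix (Fin n ⊕ Fin n) (Fin n ⊕ Fin n) ℂ) - QA Cm Cp Om Op =
      fromBlocks P Q 0 R := by
    rw [hone, hQA, fromBlocks_sub', hP, hQ, hR]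
    simp
  have hdet : IsUnit (P.det * R.det) := by
    have := (Matrix.isUnit_iff_isUnit_det _).mp hs
    rwa [hM, det_fromBlocks_zero₂₁] at this
  have hPd : IsUnit P.det := isUnit_of_mul_isUnit_left hdet
  have hRd : IsUnit R.det := isUnit_of_mul_isUnit_right hdet
  have hMN : (s • (1 : Matrix (Fin n ⊕ Fin n) (Fin n ⊕ Fin n) ℂ) - QA Cm Cp Om Op) *
      fromBlocks P⁻¹ (-(P⁻¹ * Q * R⁻¹)) 0 R⁻¹ = 1 := by
    rw [hM, fromBlocks_multiply]
    rw [show P * -(P⁻¹ * Q * R⁻¹) + Q * R⁻¹ = 0 by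
      rw [Matrix.mul_neg, ← Matrix.mul_assoc, ← Matrix.mul_assoc,
        Matrix.mul_nonsing_inv _ hPd, Matrix.one_mul, neg_add_cancel]]
    simp [Matrix.mul_nonsing_inv _ hPd, Matrix.mul_nonsing_inv _ hRd, fromBlocks_one]
  have hMinv : (s • (1 : Matrix (Fin n ⊕ Fin n) (Fin n ⊕ Fin n) ℂ) - QA Cm Cp Om Op)⁻¹ =
      fromBlocks P⁻¹ (-(P⁻¹ * Q * R⁻¹)) 0 R⁻¹ := Matrix.inv_eq_right_inv hMN
  rw [QG, hD, hC, hMinv, hB, fromBlocks_multiply, fromBlocks_multiply, fromBlocks_add]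
  rw [toBlocks_fromBlocks₁₁]
  simp
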